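/- For all real a, b, c and real w, the polynomial δ₃(a,b,c,w) := S₄ - (w+1)T_{3,1} + (w²+2w)S_{2,2} - (w²-1)U·S₁ is nonnegative, where S₄ = a⁴+b⁴+c⁴, T_{3,1} = Σ_{i≠j} symmetric cubic-linear terms a³b+ab³+b³c+bc³+c³a+ca³, S_{2,2} = a²b²+b²c²+c²a², U = abc, S₁ = a+b+c. In particular δ₃(x,1,1,w) = (x-1)²(x-w)². -/
import Mathlib

set_option maxHeartbeats 800000

/-- `δ₃(a,b,c,w) = S₄ - (w+1)T_{3,1} + (w²+2w)S_{2,2} - (w²-1)U·S₁`. -/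
def delta3 (a b c w : ℝ) : ℝ :=
  (a^4 + b^4 + c^4)
    - (w+1) * (a^3*b + a*b^3 + b^3*c + b*c^3 + c^3*a + c*a^3)
    + (w^2 + 2*w) * (a^2*b^2 + b^2*c^2 + c^2*a^2)
    - (w^2 - 1) * (a*b*c) * (a + b + c)

theorem delta3_nonneg :
    (∀ a b c w : ℝ, 0 ≤ delta3 a b c w) ∧
      (∀ x w : ℝ, delta3 x 1 1 w = (x-1)^2 * (x-w)^2) := by
  constructor
  · intro a b c w
    have hsum : (a*b - b*c)^2 + (b*c - c*a)^2 + (c*a - a*b)^2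
        = 2 * (a^2*b^2 + b^2*c^2 + c^2*a^2 - a*b*c*(a+b+c)) := by ring
    have hA : 0 ≤ a^2*b^2 + b^2*c^2 + c^2*a^2 - a*b*c*(a+b+c) := by
      nlinarith [sq_nonneg (a*b - b*c), sq_nonneg (b*c - c*a), sq_nonneg (c*a - a*b)]
    have key : 4 * (a^2*b^2 + b^2*c^2 + c^2*a^2 - a*b*c*(a+b+c)) * delta3 a b c w
        = (2*(a^2*b^2 + b^2*c^2 + c^2*a^2 - a*b*c*(a+b+c))*w
            + (2*(a^2*b^2 + b^2*c^2 + c^2*a^2)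
               - (a^3*b + a*b^3 + b^3*c + b*c^3 + c^3*a + c*a^3)))^2
          + 3*((a-b)*(b-c)*(c-a)*(a+b+c))^2 := by
      unfold delta3; ring
    rcases eq_or_lt_of_le hA with h0 | hpos
    · -- A = 0 : then ab = bc = ca
      have hxy : (a*b - b*c)^2 = 0 := by
        have := sq_nonneg (a*b - b*c)
        have := sq_nonneg (b*c - c*a)
        have := sq_nonneg (c*a - a*b)
        linarith
      have hyz : (b*c - c*a)^2 = 0 := by
        have := sq_nonneg (a*b - b*c)
        have := sq_nonneg (b*c - c*a)
        have := sq_nonneg (c*a - a*b)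
        linarith
      have h1 : a*b - b*c = 0 := by
        exact pow_eq_zero_iff (n := 2) (by norm_num) |>.mp hxy
      have h2 : b*c - c*a = 0 := by
        exact pow_eq_zero_iff (n := 2) (by norm_num) |>.mp hyz
      have h1' : b * (a - c) = 0 := by linear_combination h1
      rcases mul_eq_zero.mp h1' with hb | hac
      · -- b = 0, so c*a = 0
        have hca : c * a = 0 := by rw [hb] at h2; linarith [h2]
        rcases mul_eq_zero.mp hca with hc | ha
        · subst hb; subst hc
          have h : delta3 a 0 0 w = a^4 := by unfold delta3; ring
          rw [h]; positivity
        · subst hb; subst ha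
          have h : delta3 0 0 c w = c^4 := by unfold delta3; ring
          rw [h]; positivity
      · -- a = c
        have hac' : a = c := by
          have := sub_eq_zero.mp hac; linarith
        have h2' : c * (b - a) = 0 := by linear_combination h2
        rcases mul_eq_zero.mp h2' with hc | hba
        · subst hc
          have ha0 : a = 0 := hac'
          subst ha0
          have h : delta3 0 b 0 w = b^4 := by unfold delta3; ring
          rw [h]; positivity
        · have hb : b = a := by
            have := sub_eq_zero.mp hba; linarith
          have hc : c = a := hac'.symm
          have h : delta3 a b c w = 0 := by rw [hb, hc]; unfold delta3; ring
          rw [h]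
    · have h4 : 0 ≤ 4 * (a^2*b^2 + b^2*c^2 + c^2*a^2 - a*b*c*(a+b+c)) * delta3 a b c w := by
        rw [key]; positivity
      have h5 : (0:ℝ) < 4 * (a^2*b^2 + b^2*c^2 + c^2*a^2 - a*b*c*(a+b+c)) := by linarith
      have h6 : (4 * (a^2*b^2 + b^2*c^2 + c^2*a^2 - a*b*c*(a+b+c))) * 0
          ≤ (4 * (a^2*b^2 + b^2*c^2 + c^2*a^2 - a*b*c*(a+b+c))) * delta3 a b c w := by
        rw [mul_zero]; exact h4
      exact le_of_mul_le_mul_left h6 h5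
  · intro x w
    unfold delta3; ring
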